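/- If P : ℝ → ℝ solves P'' = -P/√(1+P²) (the second-order form of the characteristic system) with nonconstant C = (P')² + 2√(1+P²) > 2, then P is periodic and the period T = 2∫_{P₋}^{P₊} dP/√(C - 2√(1+P²)) with P± = ±√(C²-4)/2 satisfies T > 2π, and T → 2π as C → 2⁺. -/

import Mathlib

/-! The system is reversible: `θ ↦ (P (2s - θ), -E (2s - θ))` is again a solution, so by
uniqueness `P` is symmetric about every zero `s` of `E`, and composing the reflections at two
consecutive zeros `θ₀ < θ₁` makes `P` periodic with period `2 (θ₁ - θ₀)`. Such zeros exist: if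
`E` kept a sign, `P` would be monotone and one of `P`, `E` would drift linearly to `∓∞`. At a zero
of `E` the energy forces `P = P±`, and between consecutive zeros `P` runs monotonically from `P₋`
to `P₊`, so `θ₁ - θ₀ = ∫ dP / |E| = Tper c / 2`. Substituting `P = P₊ sin t` gives
`Tper c = ∫_{-π/2}^{π/2} √(c + 2 √(1 + P₊² sin² t)) dt`, whose integrand lies between `√(c + 2)`
and `√(2c)`, so `π √(c + 2) ≤ Tper c ≤ π √(2c)`. -/

open Filter

open Set Real Topology

/-- The period of relativistic oscillations on the level set `C = c`. -/
noncomputable def Tper (c : ℝ) : ℝ :=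
  2 * ∫ x in (-(Real.sqrt (c^2 - 4) / 2))..(Real.sqrt (c^2 - 4) / 2),
    1 / Real.sqrt (c - 2 * Real.sqrt (1 + x^2))

theorem exists_neg_of_hasDerivAt_le_neg {f f' : ℝ → ℝ} {A δ : ℝ}
    (hf : ∀ x, HasDerivAt f (f' x) x) (hδ : 0 < δ) (hf' : ∀ x, A ≤ x → f' x ≤ -δ) :
    ∃ x, A ≤ x ∧ f x < 0 := by
  set x := A + (|f A| + 1) / δ
  have hAx : A ≤ x := le_add_of_nonneg_right (by positivity)
  have hmvt : f x - f A ≤ -δ * (x - A) :=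
    (convex_Ici A).image_sub_le_mul_sub_of_deriv_le
      (fun y _ => (hf y).continuousAt.continuousWithinAt)
      (fun y _ => (hf y).differentiableAt.differentiableWithinAt)
      (fun y hy => (hf y).deriv ▸ hf' y (interior_subset hy)) A self_mem_Ici x hAx hAx
  have hgrowth : δ * (x - A) = |f A| + 1 := by simp only [x, add_sub_cancel_left]; field_simp
  exact ⟨x, hAx, by linarith [le_abs_self (f A)]⟩

theorem exists_first_zero_of_eventually_ne {f : ℝ → ℝ} (hf : Continuous f) {a b : ℝ}
    (hne : ∀ᶠ x in 𝓝[>] a, f x ≠ 0) (hab : a < b) (hb : f b = 0) :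
    ∃ c, a < c ∧ f c = 0 ∧ ∀ x ∈ Ioo a c, f x ≠ 0 := by
  obtain ⟨u, hau, hu⟩ := mem_nhdsGT_iff_exists_Ioo_subset.1 hne
  set S := Ici u ∩ f ⁻¹' {0}
  have hub : u ≤ b := not_lt.1 fun hbu => hu ⟨hab, hbu⟩ hb
  have hSbdd : BddBelow S := ⟨u, fun _ hx => hx.1⟩
  have hmem : sInf S ∈ S :=
    (isClosed_Ici.inter (isClosed_singleton.preimage hf)).csInf_mem ⟨b, hub, hb⟩ hSbdd
  refine ⟨sInf S, lt_of_lt_of_le hau hmem.1, hmem.2, fun x hx hx0 => ?_⟩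
  rcases lt_or_ge x u with hxu | hux
  · exact hu ⟨hx.1, hxu⟩ hx0
  · exact (csInf_le hSbdd ⟨hux, hx0⟩).not_gt hx.2

noncomputable def relVelocity (p : ℝ) : ℝ := p / √(1 + p ^ 2)

theorem hasDerivAt_relVelocity (p : ℝ) :
    HasDerivAt relVelocity (1 / ((1 + p ^ 2) * √(1 + p ^ 2))) p := by
  have hpos : 0 < 1 + p ^ 2 := by positivity
  have hs : 0 < √(1 + p ^ 2) := sqrt_pos.2 hpos
  have hsq : √(1 + p ^ 2) ^ 2 = 1 + p ^ 2 := sq_sqrt hpos.le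
  have hsqrt : HasDerivAt (fun p : ℝ => √(1 + p ^ 2)) (2 * p / (2 * √(1 + p ^ 2))) p :=
    ((hasDerivAt_pow 2 p).const_add 1).sqrt hpos.ne' |>.congr_deriv (by ring)
  refine ((hasDerivAt_id' p).div hsqrt hs.ne').congr_deriv ?_
  field_simp
  nlinarith

theorem relVelocity_neg (p : ℝ) : relVelocity (-p) = -relVelocity p := by
  simp [relVelocity, neg_div]

theorem strictMono_relVelocity : StrictMono relVelocity :=
  strictMono_of_deriv_pos fun p => by rw [(hasDerivAt_relVelocity p).deriv]; positivity

theorem lipschitzWith_relVelocity : LipschitzWith 1 relVelocity := by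
  refine lipschitzWith_of_nnnorm_deriv_le (fun p => (hasDerivAt_relVelocity p).differentiableAt)
    fun p => ?_
  rw [← NNReal.coe_le_coe, coe_nnnorm, (hasDerivAt_relVelocity p).deriv, norm_of_nonneg
    (by positivity), NNReal.coe_one, div_le_one (by positivity)]
  have h1 : 1 ≤ √(1 + p ^ 2) := one_le_sqrt.2 (by nlinarith)
  nlinarith

noncomputable def charField (x : ℝ × ℝ) : ℝ × ℝ := (-x.2, relVelocity x.1)

theorem lipschitzWith_charField : LipschitzWith 1 charField := by
  show LipschitzWith 1 fun x : ℝ × ℝ => (-x.2, relVelocity x.1)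
  simpa using
    LipschitzWith.prod_snd.neg.prodMk (lipschitzWith_relVelocity.comp LipschitzWith.prod_fst)

noncomputable def turningPoint (c : ℝ) : ℝ := √(c ^ 2 - 4) / 2

theorem Tper_eq (c : ℝ) :
    Tper c = 2 * ∫ x in -turningPoint c..turningPoint c, 1 / √(c - 2 * √(1 + x ^ 2)) :=
  rfl

theorem turningPoint_pos {c : ℝ} (hc : 2 < c) : 0 < turningPoint c := by
  have : 0 < c ^ 2 - 4 := by nlinarith
  unfold turningPoint
  positivity

theorem sq_turningPoint {c : ℝ} (hc : 2 ≤ c) : turningPoint c ^ 2 = (c ^ 2 - 4) / 4 := by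
  rw [turningPoint, div_pow, sq_sqrt (by nlinarith)]
  norm_num

theorem abs_le_turningPoint {p e c : ℝ} (hC : e ^ 2 + 2 * √(1 + p ^ 2) = c) :
    |p| ≤ turningPoint c := by
  have hs : 1 ≤ √(1 + p ^ 2) := one_le_sqrt.2 (by nlinarith)
  have hsq := sq_sqrt (show 0 ≤ 1 + p ^ 2 by positivity)
  have hc : 2 ≤ c := by nlinarith
  refine abs_le_of_sq_le_sq ?_ (by unfold turningPoint; positivity)
  rw [sq_turningPoint hc]
  nlinarith

theorem eq_turningPoint_or_eq_neg {p c : ℝ} (hC : 2 * √(1 + p ^ 2) = c) :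
    p = turningPoint c ∨ p = -turningPoint c := by
  have hs : 1 ≤ √(1 + p ^ 2) := one_le_sqrt.2 (by nlinarith)
  have hsq := sq_sqrt (show 0 ≤ 1 + p ^ 2 by positivity)
  refine sq_eq_sq_iff_eq_or_eq_neg.1 ?_
  rw [sq_turningPoint (by linarith)]
  nlinarith

structure IsCharSol (P E : ℝ → ℝ) : Prop where
  hasDerivAt_P : ∀ θ, HasDerivAt P (-E θ) θ
  hasDerivAt_E : ∀ θ, HasDerivAt E (relVelocity (P θ)) θ

namespace IsCharSol

variable {P E : ℝ → ℝ} {c : ℝ}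

theorem continuous_P (h : IsCharSol P E) : Continuous P :=
  continuous_iff_continuousAt.2 fun θ => (h.hasDerivAt_P θ).continuousAt

theorem continuous_E (h : IsCharSol P E) : Continuous E :=
  continuous_iff_continuousAt.2 fun θ => (h.hasDerivAt_E θ).continuousAt

theorem neg (h : IsCharSol P E) : IsCharSol (-P) (-E) where
  hasDerivAt_P θ := (h.hasDerivAt_P θ).neg
  hasDerivAt_E θ := by simpa [relVelocity_neg] using (h.hasDerivAt_E θ).neg

theorem timeReversal (h : IsCharSol P E) (s : ℝ) :
    IsCharSol (fun θ => P (s - θ)) (fun θ => -E (s - θ)) where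
  hasDerivAt_P θ := by simpa using (h.hasDerivAt_P (s - θ)).comp_const_sub s θ
  hasDerivAt_E θ := by simpa using ((h.hasDerivAt_E (s - θ)).comp_const_sub s θ).fun_neg

theorem unique {P' E' : ℝ → ℝ} (h : IsCharSol P E) (h' : IsCharSol P' E') {θ₀ : ℝ}
    (hP : P θ₀ = P' θ₀) (hE : E θ₀ = E' θ₀) : P = P' := by
  have hsol : ∀ {P E : ℝ → ℝ}, IsCharSol P E → ∀ θ,
      HasDerivAt (fun θ => (P θ, E θ)) (charField (P θ, E θ)) θ ∧ (P θ, E θ) ∈ univ :=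
    fun h θ => ⟨(h.hasDerivAt_P θ).prodMk (h.hasDerivAt_E θ), trivial⟩
  have := ODE_solution_unique_univ (v := fun _ => charField) (t₀ := θ₀)
    (fun _ => lipschitzWith_charField.lipschitzOnWith) (hsol h) (hsol h') (by rw [hP, hE])
  funext θ
  exact congrArg Prod.fst (congrFun this θ)

theorem reflect (h : IsCharSol P E) {s : ℝ} (hs : E s = 0) (θ : ℝ) : P (2 * s - θ) = P θ := by
  have := h.unique (h.timeReversal (2 * s)) (θ₀ := s) (by ring_nf) (by ring_nf; simp [hs])
  exact (congrFun this θ).symm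

theorem periodic_of_E_eq_zero (h : IsCharSol P E) {θ₀ θ₁ : ℝ} (h₀ : E θ₀ = 0) (h₁ : E θ₁ = 0) :
    Function.Periodic P (2 * (θ₁ - θ₀)) := fun θ => by
  rw [← h.reflect h₀ θ, ← h.reflect h₁ (2 * θ₀ - θ)]
  ring_nf

theorem not_forall_E_pos (h : IsCharSol P E) (A : ℝ) : ¬ ∀ θ, A < θ → 0 < E θ := by
  intro hpos
  have hanti : AntitoneOn P (Ioi A) :=
    antitoneOn_of_deriv_nonpos (convex_Ioi A) h.continuous_P.continuousOn
      (fun θ _ => (h.hasDerivAt_P θ).differentiableAt.differentiableWithinAt)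
      fun θ hθ => by
        rw [interior_Ioi] at hθ
        rw [(h.hasDerivAt_P θ).deriv]
        linarith [hpos θ hθ]
  by_cases hsign : ∃ θ₁, A < θ₁ ∧ P θ₁ < 0
  · -- once `P` is negative it stays below `P θ₁`, so `E` decreases at a definite rate
    obtain ⟨θ₁, hAθ₁, hP₁⟩ := hsign
    have hv : relVelocity (P θ₁) < 0 := div_neg_of_neg_of_pos hP₁ (by positivity)
    obtain ⟨θ, hθ, hEθ⟩ := exists_neg_of_hasDerivAt_le_neg h.hasDerivAt_E (neg_pos.2 hv)
      fun θ hθ => by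
        rw [neg_neg]
        exact strictMono_relVelocity.monotone (hanti hAθ₁ (hAθ₁.trans_le hθ) hθ)
    exact (hpos θ (hAθ₁.trans_le hθ)).not_gt hEθ
  · -- otherwise `E` increases, so `P` decreases at a definite rate
    push Not at hsign
    have hmono : MonotoneOn E (Ioi A) :=
      monotoneOn_of_deriv_nonneg (convex_Ioi A) h.continuous_E.continuousOn
        (fun θ _ => (h.hasDerivAt_E θ).differentiableAt.differentiableWithinAt)
        fun θ hθ => by
          rw [interior_Ioi] at hθ
          rw [(h.hasDerivAt_E θ).deriv]
          exact div_nonneg (hsign θ hθ) (sqrt_nonneg _)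
    have hA₁ : A < A + 1 := lt_add_one A
    obtain ⟨θ, hθ, hPθ⟩ := exists_neg_of_hasDerivAt_le_neg h.hasDerivAt_P (hpos _ hA₁)
      fun θ hθ => neg_le_neg (hmono hA₁ (hA₁.trans_le hθ) hθ)
    exact (hsign θ (hA₁.trans_le hθ)).not_gt hPθ

theorem exists_E_eq_zero_gt (h : IsCharSol P E) (A : ℝ) : ∃ θ, A < θ ∧ E θ = 0 := by
  by_contra! hne
  rcases hasDerivWithinAt_forall_lt_or_forall_gt_of_forall_ne (convex_Ioi A)
    (fun θ _ => (h.hasDerivAt_P θ).hasDerivWithinAt) (m := 0)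
    (fun θ hθ => neg_ne_zero.2 (hne θ hθ)) with hneg | hpos
  · exact h.not_forall_E_pos A fun θ hθ => neg_neg_iff_pos.1 (hneg θ hθ)
  · exact h.neg.not_forall_E_pos A hpos

theorem integral_eq_sub (h : IsCharSol P E) (hC : ∀ θ, E θ ^ 2 + 2 * √(1 + P θ ^ 2) = c)
    {θ₀ θ₁ : ℝ} (hle : θ₀ ≤ θ₁) (hneg : ∀ θ ∈ Ioo θ₀ θ₁, E θ < 0) :
    ∫ x in P θ₀..P θ₁, 1 / √(c - 2 * √(1 + x ^ 2)) = θ₁ - θ₀ := by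
  rw [← intervalIntegral.integral_comp_mul_deriv_of_deriv_nonneg (f' := fun θ => -E θ)
    h.continuous_P.continuousOn (fun θ _ => h.hasDerivAt_P θ) fun θ hθ => by
      rw [min_eq_left hle, max_eq_right hle] at hθ
      linarith [hneg θ hθ]]
  calc _ = ∫ _ in θ₀..θ₁, (1 : ℝ) := intervalIntegral.integral_congr_Ioo_of_le hle fun θ hθ => by
          rw [Function.comp_apply, show c - 2 * √(1 + P θ ^ 2) = E θ ^ 2 by linarith [hC θ],
            sqrt_sq_eq_abs, abs_of_neg (hneg θ hθ)]
          exact one_div_mul_cancel (neg_ne_zero.2 (hneg θ hθ).ne)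
    _ = θ₁ - θ₀ := by simp

theorem exists_next_E_eq_zero (h : IsCharSol P E) (hC : ∀ θ, E θ ^ 2 + 2 * √(1 + P θ ^ 2) = c)
    (hc : 2 < c) {θ₀ : ℝ} (hP₀ : P θ₀ = -turningPoint c) :
    ∃ θ₁, θ₀ < θ₁ ∧ E θ₁ = 0 ∧ ∀ θ ∈ Ioo θ₀ θ₁, E θ < 0 := by
  have hv : relVelocity (P θ₀) ≠ 0 := by
    rw [hP₀]
    exact (div_neg_of_neg_of_pos (neg_neg_of_pos (turningPoint_pos hc)) (by positivity)).ne
  have hne : ∀ᶠ θ in 𝓝[>] θ₀, E θ ≠ 0 :=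
    nhdsGT_le_nhdsNE θ₀ ((h.hasDerivAt_E θ₀).eventually_ne hv)
  obtain ⟨b, hb, hb₀⟩ := h.exists_E_eq_zero_gt θ₀
  obtain ⟨θ₁, h01, h₁, hne₁⟩ := exists_first_zero_of_eventually_ne h.continuous_E hne hb hb₀
  refine ⟨θ₁, h01, h₁, ?_⟩
  rcases hasDerivWithinAt_forall_lt_or_forall_gt_of_forall_ne (convex_Ioo θ₀ θ₁)
    (fun θ _ => (h.hasDerivAt_P θ).hasDerivWithinAt) (m := 0)
    (fun θ hθ => neg_ne_zero.2 (hne₁ θ hθ)) with hdec | hinc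
  · -- `P` would fall below its minimum `-turningPoint c`
    have hanti : StrictAntiOn P (Icc θ₀ θ₁) :=
      strictAntiOn_of_deriv_neg (convex_Icc _ _) h.continuous_P.continuousOn fun θ hθ => by
        rw [interior_Icc] at hθ
        rw [(h.hasDerivAt_P θ).deriv]
        exact hdec θ hθ
    have hlt := hanti (left_mem_Icc.2 h01.le) (right_mem_Icc.2 h01.le) h01
    have hbound := (abs_le.1 (abs_le_turningPoint (hC θ₁))).1
    linarith
  · exact fun θ hθ => neg_pos.1 (hinc θ hθ)

theorem periodic_of_eq_neg_turningPoint (h : IsCharSol P E)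
    (hC : ∀ θ, E θ ^ 2 + 2 * √(1 + P θ ^ 2) = c) (hc : 2 < c) {θ₀ : ℝ} (h₀ : E θ₀ = 0)
    (hP₀ : P θ₀ = -turningPoint c) : Function.Periodic P (Tper c) := by
  obtain ⟨θ₁, h01, h₁, hneg⟩ := h.exists_next_E_eq_zero hC hc hP₀
  have htime := h.integral_eq_sub hC h01.le hneg
  rcases eq_turningPoint_or_eq_neg (by simpa [h₁] using hC θ₁) with hP₁ | hP₁
  · rw [hP₀, hP₁] at htime
    rw [Tper_eq, htime]
    exact h.periodic_of_E_eq_zero h₀ h₁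
  · rw [hP₀, hP₁, intervalIntegral.integral_same] at htime
    linarith

theorem periodic (h : IsCharSol P E) (hC : ∀ θ, E θ ^ 2 + 2 * √(1 + P θ ^ 2) = c)
    (hc : 2 < c) : Function.Periodic P (Tper c) := by
  obtain ⟨θ₀, -, h₀⟩ := h.exists_E_eq_zero_gt 0
  rcases eq_turningPoint_or_eq_neg (by simpa [h₀] using hC θ₀) with hP₀ | hP₀
  · have := h.neg.periodic_of_eq_neg_turningPoint (θ₀ := θ₀) (by simpa using hC) hc
      (by simp [h₀]) (by simp [hP₀])
    exact fun θ => neg_injective (this θ)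
  · exact h.periodic_of_eq_neg_turningPoint hC hc h₀ hP₀

end IsCharSol

theorem sqrt_one_add_sq_turningPoint_mul_le {c : ℝ} (hc : 2 ≤ c) (s : ℝ) (hs : s ^ 2 ≤ 1) :
    √(1 + (turningPoint c * s) ^ 2) ≤ c / 2 := by
  rw [sqrt_le_left (by linarith), mul_pow, sq_turningPoint hc]
  nlinarith [mul_le_mul_of_nonneg_left hs (by nlinarith : (0 : ℝ) ≤ (c ^ 2 - 4) / 4)]

theorem sqrt_sub_mul_sqrt_add {c : ℝ} (hc : 2 ≤ c) (t : ℝ) :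
    √(c - 2 * √(1 + (turningPoint c * sin t) ^ 2)) *
      √(c + 2 * √(1 + (turningPoint c * sin t) ^ 2)) = 2 * turningPoint c * |cos t| := by
  set Y := √(1 + (turningPoint c * sin t) ^ 2)
  have hY : Y ≤ c / 2 := sqrt_one_add_sq_turningPoint_mul_le hc _ (sin_sq_le_one t)
  have hYsq : Y ^ 2 = 1 + (turningPoint c * sin t) ^ 2 := sq_sqrt (by positivity)
  have ha : 0 ≤ turningPoint c := by unfold turningPoint; positivity
  rw [← sqrt_mul (by linarith), ← sqrt_sq (by positivity : 0 ≤ 2 * turningPoint c * |cos t|)]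
  congr 1
  rw [mul_pow, mul_pow, sq_abs, sq_turningPoint hc, cos_sq', ← sub_eq_zero]
  rw [mul_pow, sq_turningPoint hc] at hYsq
  linear_combination (-4) * hYsq

/-- The substitution `x = turningPoint c * sin t` removes the endpoint singularities. -/
theorem Tper_eq_integral_sin {c : ℝ} (hc : 2 < c) :
    Tper c = ∫ t in -(π / 2)..π / 2, √(c + 2 * √(1 + (turningPoint c * sin t) ^ 2)) := by
  set a := turningPoint c
  have hπ : -(π / 2) ≤ π / 2 := by linarith [pi_pos]
  have hsubst := intervalIntegral.integral_comp_mul_deriv_of_deriv_nonneg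
    (g := fun x => 1 / √(c - 2 * √(1 + x ^ 2))) (f := fun t => a * sin t)
    (f' := fun t => a * cos t)
    (continuous_const.mul continuous_sin).continuousOn (fun t _ => (hasDerivAt_sin t).const_mul a)
    fun t ht => by
      rw [min_eq_left hπ, max_eq_right hπ] at ht
      exact mul_nonneg (turningPoint_pos hc).le (cos_nonneg_of_mem_Icc ⟨ht.1.le, ht.2.le⟩)
  simp only [sin_neg, sin_pi_div_two, mul_neg, mul_one] at hsubst
  rw [Tper_eq, ← hsubst, ← intervalIntegral.integral_const_mul]
  refine intervalIntegral.integral_congr_Ioo_of_le hπ fun t ht => ?_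
  have hcos := cos_pos_of_mem_Ioo ht
  have hprod : √(c - 2 * √(1 + (a * sin t) ^ 2)) * √(c + 2 * √(1 + (a * sin t) ^ 2)) =
      2 * a * cos t := by
    simpa [abs_of_pos hcos] using sqrt_sub_mul_sqrt_add hc.le t
  have hsub : 0 < √(c - 2 * √(1 + (a * sin t) ^ 2)) :=
    pos_of_mul_pos_left (hprod ▸ mul_pos (mul_pos two_pos (turningPoint_pos hc)) hcos)
      (sqrt_nonneg _)
  rw [Function.comp_apply]
  generalize √(c - 2 * √(1 + (a * sin t) ^ 2)) = S at hprod hsub ⊢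
  rw [show 2 * (1 / S * (a * cos t)) = 2 * a * cos t / S by ring, ← hprod,
    mul_div_cancel_left₀ _ hsub.ne']

theorem pi_mul_sqrt_add_two_le_Tper {c : ℝ} (hc : 2 < c) : π * √(c + 2) ≤ Tper c := by
  have hbound : ∫ _ in -(π / 2)..π / 2, √(c + 2) ≤
      ∫ t in -(π / 2)..π / 2, √(c + 2 * √(1 + (turningPoint c * sin t) ^ 2)) :=
    intervalIntegral.integral_mono_on (by linarith [pi_pos]) intervalIntegrable_const
      (Continuous.intervalIntegrable (by fun_prop) _ _) fun t _ =>
        sqrt_le_sqrt <| by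
          linarith [one_le_sqrt.2 (le_add_of_nonneg_right (sq_nonneg (turningPoint c * sin t)))]
  rw [intervalIntegral.integral_const, smul_eq_mul] at hbound
  rw [Tper_eq_integral_sin hc]
  convert hbound using 1
  ring

theorem Tper_le_pi_mul_sqrt_two_mul {c : ℝ} (hc : 2 < c) : Tper c ≤ π * √(2 * c) := by
  have hbound : ∫ t in -(π / 2)..π / 2, √(c + 2 * √(1 + (turningPoint c * sin t) ^ 2)) ≤
      ∫ _ in -(π / 2)..π / 2, √(2 * c) :=
    intervalIntegral.integral_mono_on (by linarith [pi_pos])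
      (Continuous.intervalIntegrable (by fun_prop) _ _)
      intervalIntegrable_const fun t _ =>
        sqrt_le_sqrt (by linarith [sqrt_one_add_sq_turningPoint_mul_le hc.le _ (sin_sq_le_one t)])
  rw [intervalIntegral.integral_const, smul_eq_mul] at hbound
  rw [Tper_eq_integral_sin hc]
  convert hbound using 1
  ring

theorem two_mul_pi_lt_Tper {c : ℝ} (hc : 2 < c) : 2 * π < Tper c := by
  have h2 : 2 < √(c + 2) := (lt_sqrt zero_le_two).2 (by linarith)
  nlinarith [pi_mul_sqrt_add_two_le_Tper hc, pi_pos]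

theorem tendsto_Tper : Tendsto Tper (𝓝[>] 2) (𝓝 (2 * π)) := by
  have h4 : √4 = 2 := by rw [show (4 : ℝ) = 2 ^ 2 by norm_num, sqrt_sq zero_le_two]
  have hlow : Tendsto (fun c => π * √(c + 2)) (𝓝[>] 2) (𝓝 (2 * π)) :=
    ((by fun_prop : Continuous fun c : ℝ => π * √(c + 2)).tendsto' 2 _
      (by norm_num [h4, mul_comm])).mono_left nhdsWithin_le_nhds
  have hhigh : Tendsto (fun c => π * √(2 * c)) (𝓝[>] 2) (𝓝 (2 * π)) :=
    ((by fun_prop : Continuous fun c : ℝ => π * √(2 * c)).tendsto' 2 _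
      (by norm_num [h4, mul_comm])).mono_left nhdsWithin_le_nhds
  exact tendsto_of_tendsto_of_tendsto_of_le_of_le' hlow hhigh
    (eventually_nhdsWithin_of_forall fun _ hc => pi_mul_sqrt_add_two_le_Tper hc)
    (eventually_nhdsWithin_of_forall fun _ hc => Tper_le_pi_mul_sqrt_two_mul hc)

/-- A solution of the characteristic system with conserved energy `c > 2` is
periodic with period `Tper c > 2π`, and `Tper c → 2π` as `c → 2⁺`. -/
theorem stmt16 (P E : ℝ → ℝ) (c : ℝ) (hc : 2 < c)
    (hP : ∀ θ, HasDerivAt P (-(E θ)) θ)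
    (hE : ∀ θ, HasDerivAt E (P θ / Real.sqrt (1 + (P θ)^2)) θ)
    (hC : ∀ θ, (E θ)^2 + 2 * Real.sqrt (1 + (P θ)^2) = c) :
    Function.Periodic P (Tper c) ∧ 2 * Real.pi < Tper c ∧
      Tendsto Tper (nhdsWithin 2 (Set.Ioi 2)) (nhds (2 * Real.pi)) :=
  ⟨IsCharSol.periodic ⟨hP, hE⟩ hC hc, two_mul_pi_lt_Tper hc, tendsto_Tper⟩
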